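/- Efficient approximability by matrix-product states from bounded Renyi block entropies: Let d ≥ 2, α ∈ (0, 1) and c > 0. Let (ψ_N)_{N≥1} be a sequence of unit vectors ψ_N ∈ (ℂ^d)^{⊗N} such that for all N and all 1 ≤ n ≤ N, the reduced density matrix ρ_{N,n} of ψ_N on the block {1, …, n} has α-Renyi entropy S_α(ρ_{N,n}) ≤ c. Then for every δ > 0 there exists a polynomial P such that for every N there exists a matrix-product state unit vector φ_N with open boundary conditions and bond dimension D ≤ P(N) satisfying ‖ψ_Nψ_N† − φ_Nφ_N†‖₁ ≤ δ, where ‖·‖₁ is the trace norm. -/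

import Mathlib

open scoped BigOperators
open Matrix

/-- The α-Renyi entropy (in bits) of a matrix: `S_α(ρ) = (1/(1−α))·log₂ ∑ᵢ λᵢ^α` where `λᵢ`
are the eigenvalues (junk value `0` if not Hermitian). -/
noncomputable def renyiEntropy {n : Type*} [Fintype n] [DecidableEq n] (α : ℝ)
    (ρ : Matrix n n ℂ) : ℝ :=
  if h : ρ.IsHermitian then (1 / (1 - α)) * Real.logb 2 (∑ i, h.eigenvalues i ^ α) else 0

open scoped ComplexOrder in
/-- The trace norm `‖M‖₁ = tr[(M†M)^{1/2}]` of a complex matrix. -/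
noncomputable def traceNorm {n : Type*} [Fintype n] [DecidableEq n]
    (M : Matrix n n ℂ) : ℝ :=
  (((Matrix.posSemidef_conjTranspose_mul_self M).1.eigenvectorUnitary.1 *
      Matrix.diagonal (((↑) : ℝ → ℂ) ∘ (√·) ∘ (Matrix.posSemidef_conjTranspose_mul_self M).1.eigenvalues) *
      (star (Matrix.posSemidef_conjTranspose_mul_self M).1.eigenvectorUnitary : Matrix n n ℂ)).trace).re

/-- The reduced density matrix (partial trace over the sites outside `I`). -/
noncomputable def reduced {V : Type*} [Fintype V] [DecidableEq V] {d : ℕ} (I : Finset V)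
    (ρ : Matrix (V → Fin d) (V → Fin d) ℂ) :
    Matrix ({i // i ∈ I} → Fin d) ({i // i ∈ I} → Fin d) ℂ :=
  fun x y => ∑ z : {i // i ∉ I} → Fin d,
    ρ (fun i => if h : i ∈ I then x ⟨i, h⟩ else z ⟨i, h⟩)
      (fun i => if h : i ∈ I then y ⟨i, h⟩ else z ⟨i, h⟩)

/-- `φ` is a matrix-product state with open boundary conditions and bond dimension `D`:
its amplitudes are `φ(i₁,…,i_N) = v† A^{(1)}[i₁] ⋯ A^{(N)}[i_N] w` for `D×D` matrices
`A^{(k)}[j]` and boundary vectors `v, w` (the 1×D row and D×1 column matrices of the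
valence-bond construction being absorbed into boundary vectors). -/
def IsMPSOpen {d N : ℕ} (D : ℕ) (φ : (Fin N → Fin d) → ℂ) : Prop :=
  ∃ (A : Fin N → Fin d → Matrix (Fin D) (Fin D) ℂ) (v w : Fin D → ℂ),
    ∀ x, φ x = v ⬝ᵥ ((List.ofFn fun k => A k (x k)).prod).mulVec w

/-!
Cut the chain after site `n` and view `ψ` as a matrix `M` from the left block to the right
block; `M Mᴴ` is the reduced density matrix of the left block. A Renyi bound `S_α ≤ c` with
`α < 1` says `∑ λᵢ^α ≤ K := 2^((1-α)c)`, and this forces the spectrum to decay so fast that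
the weight outside the `D` largest eigenvalues is at most `K (K/D)^((1-α)/α)`. Projecting onto
the dominant eigenvectors at the cuts `N-1, …, 1` in turn costs at most the square root of that
weight per cut, because every projection is a contraction, while a projection at one cut does
not raise the Schmidt rank at the cuts to its right; so a `D` polynomial in `N` already makes
the total error over the `N - 1` cuts as small as we like. A state whose Schmidt ranks are all
`≤ D` is an MPS of bond dimension `D`: the transfer matrices express the slices at one cut in a
basis of the slices at the next cut. Renormalising, and using that `ψψ† − φφ†` has rank two,
gives the trace norm bound.
-/

namespace MPS

section L2Norm

variable {J : Type*} [Fintype J]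

noncomputable def l2Norm (f : J → ℂ) : ℝ := ‖WithLp.toLp 2 f‖

lemma l2Norm_nonneg (f : J → ℂ) : 0 ≤ l2Norm f := norm_nonneg _

lemma l2Norm_sq (f : J → ℂ) : l2Norm f ^ 2 = ∑ j, ‖f j‖ ^ 2 :=
  EuclideanSpace.norm_sq_eq _

lemma l2Norm_zero : l2Norm (0 : J → ℂ) = 0 := by
  simp [l2Norm]

lemma l2Norm_add_le (f g : J → ℂ) : l2Norm (f + g) ≤ l2Norm f + l2Norm g := by
  simpa [l2Norm] using norm_add_le (WithLp.toLp 2 f) (WithLp.toLp 2 g)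

lemma l2Norm_sub_le_l2Norm_sub_add_l2Norm_sub (f g h : J → ℂ) :
    l2Norm (f - h) ≤ l2Norm (f - g) + l2Norm (g - h) := by
  simpa using l2Norm_add_le (f - g) (g - h)

lemma l2Norm_sub_comm (f g : J → ℂ) : l2Norm (f - g) = l2Norm (g - f) := by
  simpa [l2Norm] using norm_sub_rev (WithLp.toLp 2 f) (WithLp.toLp 2 g)

lemma abs_l2Norm_sub_l2Norm_le (f g : J → ℂ) : |l2Norm f - l2Norm g| ≤ l2Norm (f - g) := by
  simpa [l2Norm] using abs_norm_sub_norm_le (WithLp.toLp 2 f) (WithLp.toLp 2 g)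

lemma l2Norm_smul (a : ℂ) (f : J → ℂ) : l2Norm (a • f) = ‖a‖ * l2Norm f := by
  simpa [l2Norm] using norm_smul a (WithLp.toLp 2 f)

/-- Rescaling `φ` onto the unit sphere moves it by `|‖φ‖ - 1| ≤ ‖ψ - φ‖`. -/
lemma l2Norm_sub_normalize_le {ψ φ : J → ℂ} {η : ℝ} (hψ : l2Norm ψ = 1)
    (hdist : l2Norm (ψ - φ) ≤ η) (hη : η < 1) :
    l2Norm (((l2Norm φ)⁻¹ : ℂ) • φ) = 1 ∧ l2Norm (ψ - ((l2Norm φ)⁻¹ : ℂ) • φ) ≤ 2 * η := by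
  have hnorm : |l2Norm φ - 1| ≤ η := by
    simpa [hψ, l2Norm_sub_comm φ ψ] using (abs_l2Norm_sub_l2Norm_le φ ψ).trans
      (hdist.trans_eq' (l2Norm_sub_comm _ _))
  have hpos : 0 < l2Norm φ := by linarith [(abs_le.mp hnorm).1]
  refine ⟨?_, ?_⟩
  · rw [l2Norm_smul, ← Complex.ofReal_inv, Complex.norm_real, Real.norm_eq_abs,
      abs_of_pos (inv_pos.mpr hpos), inv_mul_cancel₀ hpos.ne']
  have hrescale : l2Norm (φ - ((l2Norm φ)⁻¹ : ℂ) • φ) = |l2Norm φ - 1| := by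
    rw [show φ - ((l2Norm φ)⁻¹ : ℂ) • φ = (1 - ((l2Norm φ)⁻¹ : ℂ)) • φ by
      rw [sub_smul, one_smul], l2Norm_smul, ← Complex.ofReal_inv, ← Complex.ofReal_one,
      ← Complex.ofReal_sub, Complex.norm_real, Real.norm_eq_abs]
    calc |1 - (l2Norm φ)⁻¹| * l2Norm φ = |(1 - (l2Norm φ)⁻¹) * l2Norm φ| := by
          rw [abs_mul, abs_of_pos hpos]
      _ = |l2Norm φ - 1| := by rw [sub_mul, one_mul, inv_mul_cancel₀ hpos.ne']
  calc l2Norm (ψ - ((l2Norm φ)⁻¹ : ℂ) • φ)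
      ≤ l2Norm (ψ - φ) + l2Norm (φ - ((l2Norm φ)⁻¹ : ℂ) • φ) :=
        l2Norm_sub_le_l2Norm_sub_add_l2Norm_sub _ _ _
    _ ≤ 2 * η := by linarith

end L2Norm

lemma sum_le_mul_rpow_of_forall_le {ι : Type*} {s : Finset ι} {lam : ι → ℝ}
    (hlam : ∀ i, 0 ≤ lam i) {α t K : ℝ} (hα0 : 0 < α) (hα1 : α ≤ 1) (ht : 0 ≤ t)
    (hsmall : ∀ j ∈ s, lam j ≤ t)
    (hpow : ∑ i ∈ s, lam i ^ α ≤ K) : ∑ i ∈ s, lam i ≤ K * t ^ (1 - α) := by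
  have hinterp : ∀ j ∈ s, lam j ≤ lam j ^ α * t ^ (1 - α) := by
    intro j hj
    rcases (hlam j).eq_or_lt with h0 | h0
    · rw [← h0, Real.zero_rpow hα0.ne', zero_mul]
    · calc lam j = lam j ^ α * lam j ^ (1 - α) := by
            rw [← Real.rpow_add h0, add_sub_cancel, Real.rpow_one]
        _ ≤ lam j ^ α * t ^ (1 - α) := mul_le_mul_of_nonneg_left
            (Real.rpow_le_rpow (hlam j) (hsmall j hj) (by linarith))
            (Real.rpow_nonneg (hlam j) _)
  calc ∑ i ∈ s, lam i ≤ ∑ i ∈ s, lam i ^ α * t ^ (1 - α) := Finset.sum_le_sum hinterp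
    _ = (∑ i ∈ s, lam i ^ α) * t ^ (1 - α) := by rw [Finset.sum_mul]
    _ ≤ K * t ^ (1 - α) := mul_le_mul_of_nonneg_right hpow (Real.rpow_nonneg ht _)

section RenyiTail

variable {ι : Type*} [Fintype ι] [DecidableEq ι]

lemma exists_card_eq_forall_le (lam : ι → ℝ) {m : ℕ} (hm : m ≤ Fintype.card ι) :
    ∃ S : Finset ι, S.card = m ∧ ∀ i ∈ S, ∀ j ∉ S, lam j ≤ lam i := by
  induction m with
  | zero => exact ⟨∅, rfl, by simp⟩
  | succ m ih =>
    obtain ⟨S, hcard, htop⟩ := ih (Nat.le_of_succ_le hm)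
    have hne : Sᶜ.Nonempty := by
      rw [← Finset.card_pos, Finset.card_compl, hcard]
      omega
    obtain ⟨j₀, hj₀, hmax⟩ := Finset.exists_max_image Sᶜ lam hne
    refine ⟨insert j₀ S, by rw [Finset.card_insert_of_notMem (Finset.mem_compl.mp hj₀), hcard],
      fun i hi j hj => ?_⟩
    have hjS : j ∉ S := fun h => hj (Finset.mem_insert_of_mem h)
    rcases Finset.mem_insert.mp hi with rfl | hiS
    · exact hmax j (Finset.mem_compl.mpr hjS)
    · exact htop i hiS j hjS

/-- If `∑ λᵢ^α ≤ K`, every `λⱼ` outside the `D` largest satisfies `D λⱼ^α ≤ K`. -/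
lemma exists_card_le_sum_compl_le {lam : ι → ℝ} (hlam : ∀ i, 0 ≤ lam i) {α K : ℝ}
    (hα0 : 0 < α) (hα1 : α ≤ 1) (hpow : ∑ i, lam i ^ α ≤ K) {D : ℕ} (hD : 0 < D) :
    ∃ S : Finset ι, S.card ≤ D ∧ ∑ i ∈ Sᶜ, lam i ≤ K * (K / D) ^ ((1 - α) / α) := by
  have hK : 0 ≤ K := (Finset.sum_nonneg fun i _ => Real.rpow_nonneg (hlam i) α).trans hpow
  have hsub : ∀ s : Finset ι, ∑ i ∈ s, lam i ^ α ≤ K := fun s =>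
    (Finset.sum_le_sum_of_subset_of_nonneg (Finset.subset_univ s)
      fun i _ _ => Real.rpow_nonneg (hlam i) α).trans hpow
  by_cases hcard : Fintype.card ι ≤ D
  · refine ⟨Finset.univ, by simpa using hcard, ?_⟩
    rw [Finset.compl_univ, Finset.sum_empty]
    positivity
  obtain ⟨S, hScard, htop⟩ := exists_card_eq_forall_le lam (not_le.mp hcard).le
  refine ⟨S, hScard.le, ?_⟩
  have hDpos : (0 : ℝ) < D := by exact_mod_cast hD
  have hsmall : ∀ j ∈ Sᶜ, lam j ≤ (K / D) ^ α⁻¹ := by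
    intro j hj
    have hj' : (D : ℝ) * lam j ^ α ≤ K := by
      calc (D : ℝ) * lam j ^ α = ∑ _i ∈ S, lam j ^ α := by
            rw [Finset.sum_const, hScard, nsmul_eq_mul]
        _ ≤ ∑ i ∈ S, lam i ^ α := Finset.sum_le_sum fun i hi =>
            Real.rpow_le_rpow (hlam j) (htop i hi j (Finset.mem_compl.mp hj)) hα0.le
        _ ≤ K := hsub S
    calc lam j = (lam j ^ α) ^ α⁻¹ := by
          rw [← Real.rpow_mul (hlam j), mul_inv_cancel₀ hα0.ne', Real.rpow_one]
      _ ≤ (K / D) ^ α⁻¹ := Real.rpow_le_rpow (Real.rpow_nonneg (hlam j) _)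
          (by rw [le_div_iff₀ hDpos]; linarith) (inv_nonneg.mpr hα0.le)
  refine (sum_le_mul_rpow_of_forall_le hlam hα0 hα1 (by positivity) hsmall (hsub Sᶜ)).trans_eq ?_
  rw [← Real.rpow_mul (by positivity), inv_mul_eq_div]

end RenyiTail

lemma sum_rpow_eigenvalues_le_of_renyiEntropy_le {ι : Type*} [Fintype ι] [DecidableEq ι]
    {ρ : Matrix ι ι ℂ} (hρ : ρ.IsHermitian) {α c : ℝ} (hα1 : α < 1) (h : renyiEntropy α ρ ≤ c) :
    ∑ i, hρ.eigenvalues i ^ α ≤ 2 ^ ((1 - α) * c) := by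
  rw [renyiEntropy, dif_pos hρ, one_div, inv_mul_le_iff₀ (sub_pos.mpr hα1)] at h
  rcases le_or_gt (∑ i, hρ.eigenvalues i ^ α) 0 with h0 | h0
  · exact h0.trans (by positivity)
  · exact (Real.logb_le_iff_le_rpow one_lt_two h0).mp h

/-- `D ↦ K (K/D)^γ` is inverted by `t ↦ K (K/t)^(1/γ)`. -/
lemma mul_div_rpow_le_of_le {K t γ : ℝ} (hK : 0 < K) (ht : 0 < t) (hγ : 0 < γ) {D : ℝ}
    (hD : K * (K / t) ^ γ⁻¹ ≤ D) : K * (K / D) ^ γ ≤ t := by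
  have hR : 0 < K * (K / t) ^ γ⁻¹ := by positivity
  calc K * (K / D) ^ γ ≤ K * (K / (K * (K / t) ^ γ⁻¹)) ^ γ := by
        refine mul_le_mul_of_nonneg_left (Real.rpow_le_rpow ?_ ?_ hγ.le) hK.le
        · exact div_nonneg hK.le (hR.trans_le hD).le
        · exact div_le_div_of_nonneg_left hK.le hR hD
    _ = t := by
        rw [div_mul_cancel_left₀ hK.ne', ← Real.rpow_neg_one, ← Real.rpow_mul (by positivity),
          ← Real.rpow_mul (by positivity), neg_one_mul, mul_neg, inv_mul_cancel₀ hγ.ne',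
          Real.rpow_neg_one, inv_div, mul_div_cancel₀ _ hK.ne']

lemma exists_polynomial_natCeil_mul_rpow_le {C A β : ℝ} (hC : 0 ≤ C) (hA : 0 ≤ A) (hβ : 0 ≤ β) :
    ∃ P : Polynomial ℝ, ∀ x : ℝ, 0 ≤ x → (⌈C * (A * x ^ 2) ^ β⌉₊ + 1 : ℝ) ≤ P.eval x := by
  set e := ⌈2 * β⌉₊
  refine ⟨Polynomial.C (C * A ^ β + 2) * (Polynomial.X + 1) ^ e, fun x hx => ?_⟩
  have hx1 : 1 ≤ x + 1 := by linarith
  have hpow : (A * x ^ 2) ^ β ≤ A ^ β * (x + 1) ^ e := by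
    rw [Real.mul_rpow hA (by positivity), ← Real.rpow_natCast x 2, ← Real.rpow_mul hx]
    gcongr
    calc x ^ ((2 : ℕ) * β) ≤ (x + 1) ^ (2 * β) := by
          push_cast
          gcongr
          linarith
      _ ≤ (x + 1) ^ (e : ℝ) := Real.rpow_le_rpow_of_exponent_le hx1 (Nat.le_ceil _)
      _ = (x + 1) ^ e := Real.rpow_natCast _ _
  have hceil := Nat.ceil_lt_add_one (show 0 ≤ C * (A * x ^ 2) ^ β by positivity)
  simp only [Polynomial.eval_mul, Polynomial.eval_C, Polynomial.eval_pow, Polynomial.eval_add,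
    Polynomial.eval_X, Polynomial.eval_one]
  nlinarith [one_le_pow₀ (n := e) hx1, mul_le_mul_of_nonneg_left hpow hC]

section Cuts

variable {d N : ℕ}

-- Sites are numbered from `0`: `leftBlock N n` is the block `{1, …, n}` of the paper.
def leftBlock (N n : ℕ) : Finset (Fin N) := Finset.univ.filter fun i : Fin N => (i : ℕ) < n

lemma mem_leftBlock {N n : ℕ} {i : Fin N} : i ∈ leftBlock N n ↔ (i : ℕ) < n := by
  simp [leftBlock]

abbrev LeftConf (d N n : ℕ) := {i : Fin N // i ∈ leftBlock N n} → Fin d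
abbrev RightConf (d N n : ℕ) := {i : Fin N // i ∉ leftBlock N n} → Fin d

def glue (n : ℕ) (x : LeftConf d N n) (z : RightConf d N n) : Fin N → Fin d :=
  fun i => if h : i ∈ leftBlock N n then x ⟨i, h⟩ else z ⟨i, h⟩

def leftPart (n : ℕ) (v : Fin N → Fin d) : LeftConf d N n := fun i => v i
def rightPart (n : ℕ) (v : Fin N → Fin d) : RightConf d N n := fun i => v i

@[simp] lemma glue_leftPart_rightPart (n : ℕ) (v : Fin N → Fin d) :
    glue n (leftPart n v) (rightPart n v) = v := by
  funext i; simp only [glue, leftPart, rightPart]; split <;> rfl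

@[simp] lemma leftPart_glue (n : ℕ) (x : LeftConf d N n) (z : RightConf d N n) :
    leftPart n (glue n x z) = x := by
  funext i; simp only [glue, leftPart]; rw [dif_pos i.2]

@[simp] lemma rightPart_glue (n : ℕ) (x : LeftConf d N n) (z : RightConf d N n) :
    rightPart n (glue n x z) = z := by
  funext i; simp only [glue, rightPart]; rw [dif_neg i.2]

def glueEquiv (n : ℕ) : (LeftConf d N n × RightConf d N n) ≃ (Fin N → Fin d) where
  toFun p := glue n p.1 p.2
  invFun v := (leftPart n v, rightPart n v)
  left_inv p := by simp
  right_inv v := by simp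

def cutMatrix (n : ℕ) (χ : (Fin N → Fin d) → ℂ) : Matrix (LeftConf d N n) (RightConf d N n) ℂ :=
  Matrix.of fun x z => χ (glue n x z)

lemma cutMatrix_sub (n : ℕ) (χ χ' : (Fin N → Fin d) → ℂ) :
    cutMatrix n (χ - χ') = cutMatrix n χ - cutMatrix n χ' := rfl

-- Its dimension is the Schmidt rank of `χ` across cut `n`.
noncomputable def sliceSpan (n : ℕ) (χ : (Fin N → Fin d) → ℂ) : Submodule ℂ (RightConf d N n → ℂ) :=
  Submodule.span ℂ (Set.range (cutMatrix n χ).row)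

instance : IsEmpty {i : Fin N // i ∈ leftBlock N 0} :=
  ⟨fun i => by have := mem_leftBlock.mp i.2; omega⟩

instance : IsEmpty {i : Fin N // i ∉ leftBlock N N} :=
  ⟨fun i => i.2 (mem_leftBlock.mpr i.1.2)⟩

def extendLeft (n : ℕ) (x : LeftConf d N n) (j : Fin d) : LeftConf d N (n + 1) :=
  fun i => if h : (i.1 : ℕ) < n then x ⟨i.1, mem_leftBlock.mpr h⟩ else j

def consRight (n : ℕ) (j : Fin d) (z : RightConf d N (n + 1)) : RightConf d N n :=
  fun i => if h : (i.1 : ℕ) = n then j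
    else z ⟨i.1, fun hmem => by
      have h2 := mem_leftBlock.mp hmem
      have h3 : ¬ ((i.1 : ℕ) < n) := fun hc => i.2 (mem_leftBlock.mpr hc)
      omega⟩

lemma glue_consRight (n : ℕ) (x : LeftConf d N n) (j : Fin d) (z : RightConf d N (n + 1)) :
    glue n x (consRight n j z) = glue (n + 1) (extendLeft n x j) z := by
  funext i
  simp only [glue, consRight, extendLeft, mem_leftBlock]
  split_ifs <;> first | rfl | omega

lemma rightPart_eq_consRight (n : ℕ) (hn : n < N) (v : Fin N → Fin d) :
    rightPart n v = consRight n (v ⟨n, hn⟩) (rightPart (n + 1) v) := by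
  funext i
  unfold rightPart consRight
  rcases eq_or_ne (i.1 : ℕ) n with h | h
  · rw [dif_pos h]
    congr 1
    exact Fin.ext h
  · rw [dif_neg h]

lemma glue_rightPart_zero (x : LeftConf d N 0) (v : Fin N → Fin d) :
    glue 0 x (rightPart 0 v) = v := by
  funext i
  simp only [glue, rightPart, mem_leftBlock]
  split_ifs <;> first | rfl | omega

def restrictLeft (m n : ℕ) (hmn : n ≤ m) (x : LeftConf d N m) : LeftConf d N n :=
  fun i => x ⟨i.1, mem_leftBlock.mpr (by have := mem_leftBlock.mp i.2; omega)⟩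

def replaceLeft (m n : ℕ) (x : LeftConf d N m) (x' : LeftConf d N n) : LeftConf d N m :=
  fun i => if h : (i.1 : ℕ) < n then x' ⟨i.1, mem_leftBlock.mpr h⟩ else x i

lemma leftPart_glue_of_le (m n : ℕ) (hmn : n ≤ m) (x : LeftConf d N m) (z : RightConf d N m) :
    leftPart n (glue m x z) = restrictLeft m n hmn x := by
  funext i
  have hi := mem_leftBlock.mp i.2
  simp only [leftPart, glue, restrictLeft, mem_leftBlock]
  split_ifs <;> first | rfl | omega

lemma glue_rightPart_glue_of_le (m n : ℕ) (hmn : n ≤ m) (x : LeftConf d N m) (x' : LeftConf d N n)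
    (z : RightConf d N m) :
    glue n x' (rightPart n (glue m x z)) = glue m (replaceLeft m n x x') z := by
  funext i
  simp only [glue, rightPart, replaceLeft, mem_leftBlock]
  split_ifs <;> first | rfl | omega

end Cuts

lemma exists_fin_span_eq_of_finrank_le {K V : Type*} [DivisionRing K] [AddCommGroup V]
    [Module K V] (W : Submodule K V) [FiniteDimensional K W] {D : ℕ}
    (hD : Module.finrank K W ≤ D) : ∃ g : Fin D → V, Submodule.span K (Set.range g) = W := by
  classical
  let b := Module.finBasis K W
  refine ⟨fun i => if hi : (i : ℕ) < Module.finrank K W then (b ⟨i, hi⟩ : V) else 0,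
    le_antisymm ?_ ?_⟩
  · rw [Submodule.span_le]
    rintro _ ⟨i, rfl⟩
    dsimp only
    split_ifs
    exacts [(b _).2, W.zero_mem]
  · conv_lhs => rw [← Submodule.map_subtype_top W, ← b.span_eq, Submodule.map_span]
    refine Submodule.span_mono ?_
    rintro _ ⟨_, ⟨i, rfl⟩, rfl⟩
    exact ⟨⟨i, i.2.trans_le hD⟩, by simp⟩

section MPSFromSliceSpans

variable {d N : ℕ}

lemma comp_consRight_mem_sliceSpan {n : ℕ} {φ : (Fin N → Fin d) → ℂ}
    {f : RightConf d N n → ℂ} (hf : f ∈ sliceSpan n φ) (j : Fin d) :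
    (fun z => f (consRight n j z)) ∈ sliceSpan (n + 1) φ := by
  have hmap : (sliceSpan n φ).map (LinearMap.funLeft ℂ ℂ (consRight n j))
      ≤ sliceSpan (n + 1) φ := by
    rw [sliceSpan, Submodule.map_span, Submodule.span_le]
    rintro _ ⟨_, ⟨x, rfl⟩, rfl⟩
    refine Submodule.subset_span ⟨extendLeft n x j, funext fun z => ?_⟩
    simp only [Matrix.row, cutMatrix, Matrix.of_apply, LinearMap.funLeft_apply, glue_consRight]
  exact hmap ⟨f, hf, rfl⟩

lemma apply_rightPart_eq_prod_mulVec {D : ℕ} (g : (n : ℕ) → Fin D → RightConf d N n → ℂ)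
    (A : ℕ → Fin d → Matrix (Fin D) (Fin D) ℂ)
    (hA : ∀ n < N, ∀ j b z, g n b (consRight n j z) = ∑ c, A n j b c * g (n + 1) c z) :
    ∀ k n (hnk : n + k = N) (b : Fin D) (x : Fin N → Fin d),
      g n b (rightPart n x) = ((List.ofFn fun i : Fin k => A (n + i) (x ⟨n + i, by omega⟩)).prod
        *ᵥ fun c => g N c default) b := by
  intro k
  induction k with
  | zero =>
    intro n hnk b x
    subst hnk
    simp only [List.ofFn_zero, List.prod_nil, Matrix.one_mulVec]
    congr 1
    exact Subsingleton.elim _ _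
  | succ k ih =>
    intro n hnk b x
    rw [rightPart_eq_consRight n (by omega) x, hA n (by omega), List.ofFn_succ, List.prod_cons,
      ← Matrix.mulVec_mulVec]
    refine Finset.sum_congr rfl fun c _ => ?_
    rw [ih (n + 1) (by omega) c x]
    simp only [Fin.val_zero, add_zero, Fin.val_succ, add_right_comm n 1, ← add_assoc]

theorem isMPSOpen_of_finrank_sliceSpan_le {D : ℕ} {φ : (Fin N → Fin d) → ℂ}
    (h : ∀ n ≤ N, Module.finrank ℂ (sliceSpan n φ) ≤ D) : IsMPSOpen D φ := by
  classical
  have hg : ∀ n, ∃ g : Fin D → (RightConf d N n → ℂ), n ≤ N →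
      Submodule.span ℂ (Set.range g) = sliceSpan n φ := by
    intro n
    by_cases hn : n ≤ N
    · obtain ⟨g, hg⟩ := exists_fin_span_eq_of_finrank_le _ (h n hn)
      exact ⟨g, fun _ => hg⟩
    · exact ⟨0, fun hn' => absurd hn' hn⟩
  choose g hg using hg
  have hA : ∀ n (j : Fin d) (b : Fin D), ∃ a : Fin D → ℂ, n < N →
      (fun z => g n b (consRight n j z)) = ∑ c, a c • g (n + 1) c := by
    intro n j b
    by_cases hn : n < N
    · have hmem := comp_consRight_mem_sliceSpan
        (hg n hn.le ▸ Submodule.subset_span (Set.mem_range_self b)) j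
      rw [← hg (n + 1) hn] at hmem
      obtain ⟨a, ha⟩ := (Submodule.mem_span_range_iff_exists_fun ℂ).mp hmem
      exact ⟨a, fun _ => ha.symm⟩
    · exact ⟨0, fun hn' => absurd hn' hn⟩
  choose A hA using hA
  have h0 : (cutMatrix 0 φ).row default ∈ Submodule.span ℂ (Set.range (g 0)) :=
    (hg 0 N.zero_le).symm ▸ Submodule.subset_span (Set.mem_range_self _)
  obtain ⟨v, hv⟩ := (Submodule.mem_span_range_iff_exists_fun ℂ).mp h0
  refine ⟨fun k => Matrix.of (A k), v, fun c => g N c default, fun x => ?_⟩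
  have hx : φ x = ∑ b, v b * g 0 b (rightPart 0 x) := by
    simpa [cutMatrix, glue_rightPart_zero] using (congrFun hv (rightPart 0 x)).symm
  have hunroll := apply_rightPart_eq_prod_mulVec g (fun n j => Matrix.of (A n j))
    (fun n hn j b z => by simpa using congrFun (hA n j b hn) z) N 0 (zero_add N)
  simp only [hx, hunroll, zero_add, dotProduct]
  rfl

end MPSFromSliceSpans

lemma sum_sq_norm_eq_re_mul_conjTranspose_apply {I J : Type*} [Fintype J] (B : Matrix I J ℂ)
    (i : I) :
    ∑ z, ‖B i z‖ ^ 2 = ((B * Bᴴ) i i).re := by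
  simp only [Matrix.mul_apply, Matrix.conjTranspose_apply, Complex.re_sum, RCLike.star_def,
    Complex.mul_conj, Complex.ofReal_re, Complex.normSq_eq_norm_sq]

section FrobeniusNorm

variable {I J : Type*} [Fintype I] [Fintype J]

noncomputable def frobNorm (X : Matrix I J ℂ) : ℝ := l2Norm (fun p : I × J => X p.1 p.2)

lemma frobNorm_nonneg (X : Matrix I J ℂ) : 0 ≤ frobNorm X := l2Norm_nonneg _

lemma frobNorm_sq (X : Matrix I J ℂ) : frobNorm X ^ 2 = ∑ i, ∑ j, ‖X i j‖ ^ 2 := by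
  rw [frobNorm, l2Norm_sq, Fintype.sum_prod_type]

lemma frobNorm_sq_eq_re_trace (X : Matrix I J ℂ) : frobNorm X ^ 2 = (Xᴴ * X).trace.re := by
  rw [frobNorm_sq, Finset.sum_comm]
  simp only [Matrix.trace, Matrix.diag_apply, Matrix.mul_apply, Matrix.conjTranspose_apply,
    Complex.re_sum, RCLike.star_def, ← Complex.normSq_eq_conj_mul_self, Complex.ofReal_re,
    Complex.sq_norm]

lemma frobNorm_unitary_mul [DecidableEq I] {U : Matrix I I ℂ} (hU : U ∈ Matrix.unitaryGroup I ℂ)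
    (X : Matrix I J ℂ) : frobNorm (U * X) = frobNorm X := by
  rw [← sq_eq_sq₀ (frobNorm_nonneg _) (frobNorm_nonneg _), frobNorm_sq_eq_re_trace,
    frobNorm_sq_eq_re_trace, Matrix.conjTranspose_mul, Matrix.mul_assoc,
    ← Matrix.mul_assoc Uᴴ, ← Matrix.star_eq_conjTranspose, Matrix.mem_unitaryGroup_iff'.mp hU,
    Matrix.one_mul]

end FrobeniusNorm

section Truncation

variable {d N : ℕ}

lemma l2Norm_eq_frobNorm_cutMatrix (n : ℕ) (χ : (Fin N → Fin d) → ℂ) :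
    l2Norm χ = frobNorm (cutMatrix n χ) := by
  rw [← sq_eq_sq₀ (l2Norm_nonneg _) (frobNorm_nonneg _), frobNorm, l2Norm_sq, l2Norm_sq,
    ← Equiv.sum_comp (glueEquiv n)]
  rfl

noncomputable def truncate (n : ℕ) (P : Matrix (LeftConf d N n) (LeftConf d N n) ℂ)
    (χ : (Fin N → Fin d) → ℂ) : (Fin N → Fin d) → ℂ :=
  fun v => (P * cutMatrix n χ) (leftPart n v) (rightPart n v)

lemma cutMatrix_truncate (n : ℕ) (P : Matrix (LeftConf d N n) (LeftConf d N n) ℂ)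
    (χ : (Fin N → Fin d) → ℂ) : cutMatrix n (truncate n P χ) = P * cutMatrix n χ := by
  ext x z
  simp only [cutMatrix, truncate, Matrix.of_apply, leftPart_glue, rightPart_glue]

lemma truncate_sub (n : ℕ) (P : Matrix (LeftConf d N n) (LeftConf d N n) ℂ)
    (χ χ' : (Fin N → Fin d) → ℂ) : truncate n P (χ - χ') = truncate n P χ - truncate n P χ' := by
  funext v
  simp only [truncate, cutMatrix_sub, Matrix.mul_sub, Matrix.sub_apply, Pi.sub_apply]

/-- An operator acting on the sites left of cut `j ≤ m` acts on the left factor of cut `m`,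
so it cannot enlarge the span of the right slices there. -/
lemma sliceSpan_truncate_le {j m : ℕ} (hjm : j ≤ m) (P : Matrix (LeftConf d N j) (LeftConf d N j) ℂ)
    (χ : (Fin N → Fin d) → ℂ) : sliceSpan m (truncate j P χ) ≤ sliceSpan m χ := by
  rw [sliceSpan, Submodule.span_le]
  rintro _ ⟨x, rfl⟩
  have hslice : (cutMatrix m (truncate j P χ)).row x
      = ∑ x', P (restrictLeft m j hjm x) x' • (cutMatrix m χ).row (replaceLeft m j x x') := by
    funext z
    simp only [Finset.sum_apply, Pi.smul_apply, smul_eq_mul, Matrix.row, truncate,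
      leftPart_glue_of_le m j hjm, Matrix.mul_apply, cutMatrix, Matrix.of_apply,
      glue_rightPart_glue_of_le m j hjm]
  rw [hslice]
  exact Submodule.sum_mem _ fun x' _ => Submodule.smul_mem _ _
    (Submodule.subset_span (Set.mem_range_self _))

end Truncation

lemma finrank_span_row_mul_le {μ ι κ : Type*} [Fintype μ] [Fintype ι] (P : Matrix μ ι ℂ)
    (M : Matrix ι κ ℂ) : Module.finrank ℂ (Submodule.span ℂ (Set.range (P * M).row)) ≤ P.rank := by
  change Module.finrank ℂ (Submodule.span ℂ (Set.range (M.vecMulLinear ∘ P.row))) ≤ _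
  rw [Set.range_comp, ← Submodule.map_span, Matrix.rank_eq_finrank_span_row]
  exact Submodule.finrank_map_le _ _

section SpectralTruncation

variable {ι κ : Type*} [Fintype ι] [DecidableEq ι] [Fintype κ]

noncomputable def spectralProj {A : Matrix ι ι ℂ} (hA : A.IsHermitian) (S : Finset ι) :
    Matrix ι ι ℂ :=
  (hA.eigenvectorUnitary : Matrix ι ι ℂ) * Matrix.diagonal (fun i => if i ∈ S then 1 else 0) *
    star (hA.eigenvectorUnitary : Matrix ι ι ℂ)

lemma rank_spectralProj_le {A : Matrix ι ι ℂ} (hA : A.IsHermitian) (S : Finset ι) :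
    (spectralProj hA S).rank ≤ S.card := by
  classical
  calc (spectralProj hA S).rank
      ≤ (Matrix.diagonal fun i => if i ∈ S then (1 : ℂ) else 0).rank :=
        (Matrix.rank_mul_le_left _ _).trans (Matrix.rank_mul_le_right _ _)
    _ = S.card := by
        rw [Matrix.rank_diagonal, ← Fintype.card_coe]
        exact Fintype.card_congr (Equiv.subtypeEquivRight fun i => by simp)

lemma one_sub_spectralProj {A : Matrix ι ι ℂ} (hA : A.IsHermitian) (S : Finset ι) :
    1 - spectralProj hA S = spectralProj hA Sᶜ := by
  have hU := Matrix.mem_unitaryGroup_iff.mp hA.eigenvectorUnitary.2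
  rw [spectralProj, spectralProj]
  calc 1 - _ = (hA.eigenvectorUnitary : Matrix ι ι ℂ) *
        (1 - Matrix.diagonal fun i => if i ∈ S then 1 else 0) *
          star (hA.eigenvectorUnitary : Matrix ι ι ℂ) := by
        rw [Matrix.mul_sub, Matrix.sub_mul, Matrix.mul_one, hU]
    _ = _ := by
        rw [← Matrix.diagonal_one, Matrix.diagonal_sub]
        congr 3 with i
        by_cases hi : i ∈ S <;> simp [hi]

lemma frobNorm_spectralProj_mul_sq {A : Matrix ι ι ℂ} (hA : A.IsHermitian) (T : Finset ι)
    (X : Matrix ι κ ℂ) : frobNorm (spectralProj hA T * X) ^ 2 =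
      ∑ i ∈ T, ∑ z, ‖(star (hA.eigenvectorUnitary : Matrix ι ι ℂ) * X) i z‖ ^ 2 := by
  rw [spectralProj, Matrix.mul_assoc, Matrix.mul_assoc,
    frobNorm_unitary_mul hA.eigenvectorUnitary.2, frobNorm_sq]
  calc _ = ∑ i, if i ∈ T then
        ∑ z, ‖(star (hA.eigenvectorUnitary : Matrix ι ι ℂ) * X) i z‖ ^ 2 else 0 :=
        Finset.sum_congr rfl fun i _ => by
          simp only [Matrix.diagonal_mul]
          split_ifs <;> simp
    _ = _ := by rw [Finset.sum_ite_mem, Finset.univ_inter]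

lemma frobNorm_spectralProj_mul_le {A : Matrix ι ι ℂ} (hA : A.IsHermitian) (S : Finset ι)
    (X : Matrix ι κ ℂ) : frobNorm (spectralProj hA S * X) ≤ frobNorm X := by
  rw [← sq_le_sq₀ (frobNorm_nonneg _) (frobNorm_nonneg _), frobNorm_spectralProj_mul_sq,
    ← frobNorm_unitary_mul (Unitary.star_mem hA.eigenvectorUnitary.2) X, frobNorm_sq]
  exact Finset.sum_le_sum_of_subset_of_nonneg S.subset_univ fun _ _ _ => by positivity

lemma frobNorm_sub_spectralProj_mul_sq (M : Matrix ι κ ℂ) (S : Finset ι) :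
    frobNorm (M - spectralProj (Matrix.isHermitian_mul_conjTranspose_self M) S * M) ^ 2 =
      ∑ i ∈ Sᶜ, (Matrix.isHermitian_mul_conjTranspose_self M).eigenvalues i := by
  set hA := Matrix.isHermitian_mul_conjTranspose_self M
  set U : Matrix ι ι ℂ := ↑hA.eigenvectorUnitary
  have hUU : star U * U = 1 := Matrix.mem_unitaryGroup_iff'.mp hA.eigenvectorUnitary.2
  have hdiag :
      (star U * M) * (star U * M)ᴴ = Matrix.diagonal (Complex.ofReal ∘ hA.eigenvalues) := by
    rw [Matrix.conjTranspose_mul, ← Matrix.star_eq_conjTranspose, star_star, Matrix.mul_assoc,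
      ← Matrix.mul_assoc M]
    nth_rw 1 [show M * Mᴴ = U * Matrix.diagonal (Complex.ofReal ∘ hA.eigenvalues) * star U from
      hA.spectral_theorem]
    simp only [← Matrix.mul_assoc, hUU, Matrix.one_mul]
    rw [Matrix.mul_assoc, hUU, Matrix.mul_one]
  have hcompl : M - spectralProj hA S * M = spectralProj hA Sᶜ * M := by
    rw [← one_sub_spectralProj, Matrix.sub_mul, Matrix.one_mul]
  rw [hcompl, frobNorm_spectralProj_mul_sq]
  refine Finset.sum_congr rfl fun i _ => ?_
  rw [sum_sq_norm_eq_re_mul_conjTranspose_apply, hdiag, Matrix.diagonal_apply_eq]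
  rfl

end SpectralTruncation

lemma rank_add_le_rank_add_rank {m n : Type*} [Fintype m] [Fintype n] (A B : Matrix m n ℂ) :
    (A + B).rank ≤ A.rank + B.rank := by
  unfold Matrix.rank
  rw [Matrix.mulVecLin_add]
  exact (Submodule.finrank_mono (LinearMap.range_add_le _ _)).trans
    (Submodule.finrank_add_le_finrank_add_finrank _ _)

section TraceNorm

open scoped ComplexOrder MatrixOrder

variable {J : Type*} [Fintype J]

lemma frobNorm_add_le (X Y : Matrix J J ℂ) : frobNorm (X + Y) ≤ frobNorm X + frobNorm Y :=
  l2Norm_add_le _ _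

lemma frobNorm_vecMulVec_star (a b : J → ℂ) :
    frobNorm (Matrix.vecMulVec a (star b)) = l2Norm a * l2Norm b := by
  rw [← sq_eq_sq₀ (frobNorm_nonneg _) (mul_nonneg (l2Norm_nonneg _) (l2Norm_nonneg _)),
    frobNorm_sq, mul_pow, l2Norm_sq, l2Norm_sq, Finset.sum_mul_sum]
  simp only [Matrix.vecMulVec_apply, Pi.star_apply, norm_mul, norm_star, mul_pow]

variable [DecidableEq J]

lemma re_trace_cfc {A : Matrix J J ℂ} (hA : A.IsHermitian) (f : ℝ → ℝ) :
    (cfc f A).trace.re = ∑ i, f (hA.eigenvalues i) := by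
  rw [hA.cfc_eq, Matrix.IsHermitian.cfc, Unitary.conjStarAlgAut_apply, Matrix.trace_mul_cycle,
    Unitary.coe_star_mul_self, Matrix.one_mul, Matrix.trace_diagonal, Complex.re_sum]
  simp

/-- The square root of `Mᴴ M` in the definition of `traceNorm` is `|M|`, which is `cfc |·| M`
for Hermitian `M`. -/
lemma traceNorm_eq_sum_abs_eigenvalues {M : Matrix J J ℂ} (hM : M.IsHermitian) :
    traceNorm M = ∑ i, |hM.eigenvalues i| := by
  have hpos := Matrix.posSemidef_conjTranspose_mul_self M
  have habs : traceNorm M = (CFC.abs M).trace.re := by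
    rw [CFC.abs, Matrix.star_eq_conjTranspose, CFC.sqrt_eq_real_sqrt _ hpos.nonneg,
      cfcₙ_eq_cfc (hf := Real.continuous_sqrt.continuousOn) (hf0 := Real.sqrt_zero),
      hpos.1.cfc_eq]
    rfl
  rw [habs, CFC.abs_eq_cfc_norm M hM.isSelfAdjoint, re_trace_cfc hM]
  rfl

lemma frobNorm_sq_eq_sum_sq_eigenvalues {M : Matrix J J ℂ} (hM : M.IsHermitian) :
    frobNorm M ^ 2 = ∑ i, hM.eigenvalues i ^ 2 := by
  rw [frobNorm_sq_eq_re_trace, hM.eq, ← sq, ← cfc_pow_id (R := ℝ) M 2 hM.isSelfAdjoint,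
    re_trace_cfc hM]

lemma sum_abs_eigenvalues_le {M : Matrix J J ℂ} (hM : M.IsHermitian) :
    ∑ i, |hM.eigenvalues i| ≤ √M.rank * frobNorm M := by
  set s := Finset.univ.filter fun i => hM.eigenvalues i ≠ 0
  have hcard : (s.card : ℝ) = M.rank := by
    rw [hM.rank_eq_card_non_zero_eigs, Fintype.card_subtype]
  have hsum : ∑ i, |hM.eigenvalues i| = ∑ i ∈ s, |hM.eigenvalues i| := by
    rw [Finset.sum_filter]
    exact Finset.sum_congr rfl fun i _ => by split_ifs with h <;> simp_all
  rw [hsum, ← Real.sqrt_sq (frobNorm_nonneg M), ← Real.sqrt_mul (Nat.cast_nonneg _)]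
  refine Real.le_sqrt_of_sq_le ?_
  calc (∑ i ∈ s, |hM.eigenvalues i|) ^ 2 ≤ s.card * ∑ i ∈ s, |hM.eigenvalues i| ^ 2 :=
        sq_sum_le_card_mul_sum_sq
    _ ≤ M.rank * ∑ i, hM.eigenvalues i ^ 2 := by
        rw [hcard]
        gcongr
        simp only [sq_abs]
        exact Finset.sum_le_sum_of_subset_of_nonneg s.subset_univ fun i _ _ => sq_nonneg _
    _ = M.rank * frobNorm M ^ 2 := by rw [frobNorm_sq_eq_sum_sq_eigenvalues]

/-- The difference of two rank-one projectors has rank at most `2`, so its trace norm is at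
most `√2` times its Frobenius norm. -/
theorem traceNorm_vecMulVec_sub_le (a b : J → ℂ) :
    traceNorm (Matrix.vecMulVec a (star a) - Matrix.vecMulVec b (star b)) ≤
      √2 * ((l2Norm a + l2Norm b) * l2Norm (a - b)) := by
  have hH := (Matrix.posSemidef_vecMulVec_self_star a).isHermitian.sub
    (Matrix.posSemidef_vecMulVec_self_star b).isHermitian
  have hrank : (Matrix.vecMulVec a (star a) - Matrix.vecMulVec b (star b)).rank ≤ 2 := by
    rw [sub_eq_add_neg, ← Matrix.neg_vecMulVec]
    exact (rank_add_le_rank_add_rank _ _).trans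
      (add_le_add (Matrix.rank_vecMulVec_le _ _) (Matrix.rank_vecMulVec_le _ _))
  have hdecomp : Matrix.vecMulVec a (star a) - Matrix.vecMulVec b (star b) =
      Matrix.vecMulVec a (star (a - b)) + Matrix.vecMulVec (a - b) (star b) := by
    ext x y
    simp only [Matrix.sub_apply, Matrix.add_apply, Matrix.vecMulVec_apply, Pi.star_apply,
      Pi.sub_apply, star_sub]
    ring
  have hfrob : frobNorm (Matrix.vecMulVec a (star a) - Matrix.vecMulVec b (star b)) ≤
      (l2Norm a + l2Norm b) * l2Norm (a - b) := by
    rw [hdecomp]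
    refine (frobNorm_add_le _ _).trans_eq ?_
    rw [frobNorm_vecMulVec_star, frobNorm_vecMulVec_star]
    ring
  rw [traceNorm_eq_sum_abs_eigenvalues hH]
  refine (sum_abs_eigenvalues_le hH).trans (mul_le_mul ?_ hfrob (frobNorm_nonneg _)
    (Real.sqrt_nonneg _))
  exact Real.sqrt_le_sqrt (by exact_mod_cast hrank)

end TraceNorm

lemma l2Norm_sub_foldr_le {J : Type*} [Fintype J] (T : ℕ → (J → ℂ) → J → ℂ)
    (hcontr : ∀ n χ, l2Norm (T n χ) ≤ l2Norm χ)
    (hsub : ∀ n (χ χ' : J → ℂ), T n (χ - χ') = T n χ - T n χ') (ψ : J → ℂ) (l : List ℕ) :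
    l2Norm (ψ - l.foldr T ψ) ≤ (l.map fun n => l2Norm (ψ - T n ψ)).sum := by
  induction l with
  | nil => simp [l2Norm_zero]
  | cons n l ih =>
    have hsplit : ψ - T n (l.foldr T ψ) = (ψ - T n ψ) + T n (ψ - l.foldr T ψ) := by
      rw [hsub]
      abel
    rw [List.foldr_cons, hsplit, List.map_cons, List.sum_cons]
    exact (l2Norm_add_le _ _).trans (add_le_add_right ((hcontr _ _).trans ih) _)

section ChainTruncation

variable {d N : ℕ}

lemma reduced_leftBlock_eq (ψ : (Fin N → Fin d) → ℂ) (n : ℕ) :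
    reduced (leftBlock N n) (Matrix.of fun x y => ψ x * starRingEnd ℂ (ψ y)) =
      cutMatrix n ψ * (cutMatrix n ψ)ᴴ := by
  ext x y
  simp only [reduced, Matrix.mul_apply, Matrix.conjTranspose_apply, cutMatrix, Matrix.of_apply]
  rfl

lemma finrank_sliceSpan_truncate_le (n : ℕ) (P : Matrix (LeftConf d N n) (LeftConf d N n) ℂ)
    (χ : (Fin N → Fin d) → ℂ) : Module.finrank ℂ (sliceSpan n (truncate n P χ)) ≤ P.rank := by
  rw [sliceSpan, cutMatrix_truncate]
  exact finrank_span_row_mul_le _ _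

lemma sliceSpan_foldr_truncate_le (P : (n : ℕ) → Matrix (LeftConf d N n) (LeftConf d N n) ℂ)
    (χ : (Fin N → Fin d) → ℂ) {m : ℕ} :
    ∀ l : List ℕ, (∀ j ∈ l, j ≤ m) →
      sliceSpan m (l.foldr (fun n => truncate n (P n)) χ) ≤ sliceSpan m χ
  | [], _ => le_rfl
  | j :: l, hl => (sliceSpan_truncate_le (hl j List.mem_cons_self) _ _).trans
      (sliceSpan_foldr_truncate_le P χ l fun i hi => hl i (List.mem_cons_of_mem j hi))

/-- In `T₁ (T₂ (⋯ (T_{N-1} χ)))` the truncation `Tₙ` bounds the rank at cut `n`, and the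
truncations `Tⱼ`, `j < n`, applied after it act left of that cut. -/
lemma finrank_sliceSpan_foldr_truncate_le {D : ℕ} (hD : 1 ≤ D)
    (P : (n : ℕ) → Matrix (LeftConf d N n) (LeftConf d N n) ℂ)
    (hP : ∀ n, 1 ≤ n → n < N → (P n).rank ≤ D) (χ : (Fin N → Fin d) → ℂ) {n : ℕ} (hn : n ≤ N) :
    Module.finrank ℂ
      (sliceSpan n ((List.range' 1 (N - 1)).foldr (fun n => truncate n (P n)) χ)) ≤ D := by
  rcases Nat.eq_zero_or_pos n with rfl | hn0
  · refine (finrank_range_le_card _).trans ?_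
    rwa [Fintype.card_unique]
  rcases hn.eq_or_lt with rfl | hnN
  · refine (Submodule.finrank_le _).trans ?_
    rwa [Module.finrank_fintype_fun_eq_card, Fintype.card_unique]
  have hsplit : List.range' 1 (N - 1) =
      List.range' 1 (n - 1) ++ n :: List.range' (n + 1) (N - 1 - n) := by
    have happend := List.range'_append (s := 1) (m := n - 1) (n := N - n) (step := 1)
    rw [show 1 + 1 * (n - 1) = n by omega, show n - 1 + (N - n) = N - 1 by omega] at happend
    rw [← happend, show N - n = N - 1 - n + 1 by omega, List.range'_succ]
  rw [hsplit, List.foldr_append, List.foldr_cons]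
  refine (Submodule.finrank_mono (sliceSpan_foldr_truncate_le P _ _ fun j hj => ?_)).trans
    ((finrank_sliceSpan_truncate_le n _ _).trans (hP n hn0 hnN))
  rw [List.mem_range'_1] at hj
  omega

end ChainTruncation

lemma isMPSOpen_smul {d N D : ℕ} {φ : (Fin N → Fin d) → ℂ} (h : IsMPSOpen D φ) (a : ℂ) :
    IsMPSOpen D (a • φ) := by
  obtain ⟨A, v, w, hφ⟩ := h
  exact ⟨A, a • v, w, fun x => by rw [Pi.smul_apply, hφ, smul_dotProduct, smul_eq_mul]⟩

section Approximation

variable {d N : ℕ}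

/-- The squared Schmidt coefficients of `ψ` across cut `n`, i.e. the eigenvalues of the
reduced density matrix of `leftBlock N n`. -/
noncomputable def schmidtWeights (ψ : (Fin N → Fin d) → ℂ) (n : ℕ) : LeftConf d N n → ℝ :=
  (Matrix.isHermitian_mul_conjTranspose_self (cutMatrix n ψ)).eigenvalues

open scoped ComplexOrder in
lemma schmidtWeights_nonneg (ψ : (Fin N → Fin d) → ℂ) (n : ℕ) (i : LeftConf d N n) :
    0 ≤ schmidtWeights ψ n i :=
  (Matrix.posSemidef_self_mul_conjTranspose _).eigenvalues_nonneg i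

/-- Project `ψ` at every cut `n = N - 1, …, 1` onto its `D` dominant Schmidt vectors; the
errors add up by the triangle inequality because every truncation is a contraction. -/
theorem exists_isMPSOpen_l2Norm_sub_le (ψ : (Fin N → Fin d) → ℂ) {D : ℕ} (hD : 1 ≤ D) {ε : ℝ}
    (hε : 0 ≤ ε) (htail : ∀ n, 1 ≤ n → n < N → ∃ S : Finset (LeftConf d N n),
      S.card ≤ D ∧ ∑ i ∈ Sᶜ, schmidtWeights ψ n i ≤ ε ^ 2) :
    ∃ φ, IsMPSOpen D φ ∧ l2Norm (ψ - φ) ≤ N * ε := by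
  classical
  have hS : ∀ n, ∃ S : Finset (LeftConf d N n), S.card ≤ D ∧
      (1 ≤ n → n < N → ∑ i ∈ Sᶜ, schmidtWeights ψ n i ≤ ε ^ 2) := fun n =>
    if h : 1 ≤ n ∧ n < N then (htail n h.1 h.2).imp fun _ hS => ⟨hS.1, fun _ _ => hS.2⟩
    else ⟨∅, by simp, fun h1 h2 => absurd ⟨h1, h2⟩ h⟩
  choose S hScard hStail using hS
  let P := fun n => spectralProj (Matrix.isHermitian_mul_conjTranspose_self (cutMatrix n ψ)) (S n)
  refine ⟨(List.range' 1 (N - 1)).foldr (fun n => truncate n (P n)) ψ,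
    isMPSOpen_of_finrank_sliceSpan_le fun n hn => finrank_sliceSpan_foldr_truncate_le hD P
      (fun n _ _ => (rank_spectralProj_le _ _).trans (hScard n)) ψ hn, ?_⟩
  have hcontr : ∀ n χ, l2Norm (truncate n (P n) χ) ≤ l2Norm χ := fun n χ => by
    rw [l2Norm_eq_frobNorm_cutMatrix n, l2Norm_eq_frobNorm_cutMatrix n χ, cutMatrix_truncate]
    exact frobNorm_spectralProj_mul_le _ _ _
  have hterm : ∀ n ∈ List.range' 1 (N - 1), l2Norm (ψ - truncate n (P n) ψ) ≤ ε := by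
    intro n hn
    rw [List.mem_range'_1] at hn
    rw [l2Norm_eq_frobNorm_cutMatrix n, cutMatrix_sub, cutMatrix_truncate,
      ← sq_le_sq₀ (frobNorm_nonneg _) hε, frobNorm_sub_spectralProj_mul_sq]
    exact hStail n hn.1 (by omega)
  calc _ ≤ _ := l2Norm_sub_foldr_le _ hcontr (fun n => truncate_sub n (P n)) ψ _
    _ ≤ _ := List.sum_le_card_nsmul _ _ fun _ hx => by
          obtain ⟨n, hn, rfl⟩ := List.mem_map.mp hx
          exact hterm n hn
    _ ≤ N * ε := by
        rw [List.length_map, List.length_range', nsmul_eq_mul]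
        gcongr
        exact_mod_cast N.sub_le 1

/-- With `∑ λᵢ^α ≤ K` at every cut, keeping `D ≥ K (K N²/η²)^(α/(1-α))` Schmidt vectors
discards weight at most `(η/N)²` per cut. -/
theorem exists_isMPSOpen_unit_l2Norm_sub_le (ψ : (Fin N → Fin d) → ℂ) (hψ : l2Norm ψ = 1)
    {α K η : ℝ} (hα0 : 0 < α) (hα1 : α < 1) (hK : 0 < K)
    (hpow : ∀ n, 1 ≤ n → n < N → ∑ i, schmidtWeights ψ n i ^ α ≤ K) (hη : 0 < η) (hη1 : η < 1)
    {D : ℕ} (hD1 : 1 ≤ D) (hD : K * (K / η ^ 2 * N ^ 2) ^ (α / (1 - α)) ≤ D) :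
    ∃ φ, IsMPSOpen D φ ∧ l2Norm φ = 1 ∧ l2Norm (ψ - φ) ≤ 2 * η := by
  have htail : ∀ n, 1 ≤ n → n < N → ∃ S : Finset (LeftConf d N n),
      S.card ≤ D ∧ ∑ i ∈ Sᶜ, schmidtWeights ψ n i ≤ (η / N) ^ 2 := by
    intro n hn hnN
    have hN : (0 : ℝ) < N := by exact_mod_cast (Nat.zero_lt_one.trans_le hn).trans hnN
    obtain ⟨S, hS, hsum⟩ := exists_card_le_sum_compl_le (schmidtWeights_nonneg ψ n) hα0 hα1.le
      (hpow n hn hnN) hD1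
    refine ⟨S, hS, hsum.trans (mul_div_rpow_le_of_le hK (by positivity)
      (div_pos (sub_pos.mpr hα1) hα0) ?_)⟩
    rwa [inv_div, div_pow, div_div_eq_mul_div, mul_div_right_comm]
  obtain ⟨φ, hφ, hdist⟩ := exists_isMPSOpen_l2Norm_sub_le ψ hD1 (by positivity) htail
  have hdist' : l2Norm (ψ - φ) ≤ η := by
    rcases N.eq_zero_or_pos with rfl | hN
    · simp only [Nat.cast_zero, zero_mul] at hdist
      linarith
    · rwa [mul_div_cancel₀ _ (by positivity)] at hdist
  obtain ⟨hunit, hclose⟩ := l2Norm_sub_normalize_le hψ hdist' hη1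
  exact ⟨_, isMPSOpen_smul hφ _, hunit, hclose⟩

end Approximation

end MPS

open MPS in
theorem mps_approximation_from_renyi_bound_general (d : ℕ)
    (α : ℝ) (hα0 : 0 < α) (hα1 : α < 1) (c : ℝ)
    (ψ : (N : ℕ) → (Fin N → Fin d) → ℂ)
    (hunit : ∀ N, ∑ x, ‖ψ N x‖ ^ 2 = 1)
    (hrenyi : ∀ N n : ℕ, 1 ≤ n → n ≤ N →
      renyiEntropy α (reduced (Finset.univ.filter fun i : Fin N => (i : ℕ) < n)
        (Matrix.of fun x y => ψ N x * starRingEnd ℂ (ψ N y))) ≤ c) :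
    ∀ δ : ℝ, 0 < δ →
      ∃ P : Polynomial ℝ, ∀ N : ℕ,
        ∃ (D : ℕ) (φ : (Fin N → Fin d) → ℂ),
          (D : ℝ) ≤ P.eval (N : ℝ) ∧
          IsMPSOpen D φ ∧
          (∑ x, ‖φ x‖ ^ 2 = 1) ∧
          traceNorm (Matrix.of fun x y =>
            ψ N x * starRingEnd ℂ (ψ N y) - φ x * starRingEnd ℂ (φ y)) ≤ δ := by
  intro δ hδ
  set η := min (δ / 6) (1 / 2)
  have hη : 0 < η := lt_min (by positivity) one_half_pos
  set K : ℝ := 2 ^ ((1 - α) * c)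
  set β := α / (1 - α)
  obtain ⟨P, hP⟩ := exists_polynomial_natCeil_mul_rpow_le (C := K) (A := K / η ^ 2) (β := β)
    (by positivity) (by positivity) (div_nonneg hα0.le (sub_pos.mpr hα1).le)
  refine ⟨P, fun N => ?_⟩
  set R := K * (K / η ^ 2 * N ^ 2) ^ β
  have hψ : l2Norm (ψ N) = 1 :=
    (sq_eq_sq₀ (l2Norm_nonneg _) zero_le_one).mp (by rw [l2Norm_sq, hunit, one_pow])
  have hpow : ∀ n, 1 ≤ n → n < N → ∑ i, schmidtWeights (ψ N) n i ^ α ≤ K := fun n hn hnN =>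
    sum_rpow_eigenvalues_le_of_renyiEntropy_le _ hα1
      (reduced_leftBlock_eq (ψ N) n ▸ hrenyi N n hn hnN.le)
  have hR : R ≤ (⌈R⌉₊ + 1 : ℕ) := by
    push_cast
    linarith [Nat.le_ceil R]
  obtain ⟨φ, hφ, hφ1, hdist⟩ := exists_isMPSOpen_unit_l2Norm_sub_le (ψ N) hψ hα0 hα1
    (by positivity) hpow hη (by linarith [min_le_right (δ / 6) (1 / 2)]) le_add_self hR
  refine ⟨_, φ, by push_cast; exact hP N N.cast_nonneg, hφ, by rw [← l2Norm_sq, hφ1, one_pow], ?_⟩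
  refine (traceNorm_vecMulVec_sub_le (ψ N) φ).trans ?_
  rw [hψ, hφ1]
  nlinarith [Real.sq_sqrt zero_le_two, Real.sqrt_nonneg 2, min_le_left (δ / 6) (1 / 2)]

/-- **Efficient approximability by matrix-product states from bounded Renyi block
entropies.** If all blockwise α-Renyi entropies (for some fixed `α ∈ (0,1)`) of a sequence
of states are bounded by a constant `c`, then for every `δ > 0` the states can be
approximated in trace norm up to `δ` by MPS whose bond dimension grows only polynomially
in the chain length. -/
theorem mps_approximation_from_renyi_bound (d : ℕ) (hd : 2 ≤ d)
    (α : ℝ) (hα0 : 0 < α) (hα1 : α < 1) (c : ℝ) (hc : 0 < c)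
    (ψ : (N : ℕ) → (Fin N → Fin d) → ℂ)
    (hunit : ∀ N, ∑ x, ‖ψ N x‖ ^ 2 = 1)
    (hrenyi : ∀ N n : ℕ, 1 ≤ n → n ≤ N →
      renyiEntropy α (reduced (Finset.univ.filter fun i : Fin N => (i : ℕ) < n)
        (Matrix.of fun x y => ψ N x * starRingEnd ℂ (ψ N y))) ≤ c) :
    ∀ δ : ℝ, 0 < δ →
      ∃ P : Polynomial ℝ, ∀ N : ℕ,
        ∃ (D : ℕ) (φ : (Fin N → Fin d) → ℂ),
          (D : ℝ) ≤ P.eval (N : ℝ) ∧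
          IsMPSOpen D φ ∧
          (∑ x, ‖φ x‖ ^ 2 = 1) ∧
          traceNorm (Matrix.of fun x y =>
            ψ N x * starRingEnd ℂ (ψ N y) - φ x * starRingEnd ℂ (φ y)) ≤ δ :=
  mps_approximation_from_renyi_bound_general d α hα0 hα1 c ψ hunit hrenyi
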